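/- arXiv:1403.0234 — 4 statements merged into one kernel-verified Lean document; each statement's English description precedes it below -/
import Mathlib

section
/- An element r of the ring of Colombeau generalized real numbers $\widetilde{\mathbb{R}}$ is invertible in $\widetilde{\mathbb{R}}$ if and only if it is strictly nonzero, i.e., if and only if it has a representative $(r_\varepsilon)_{\varepsilon\in(0,1]}$ for which there exist $m\in\mathbb{N}$ and $\varepsilon_0>0$ such that $|r_\varepsilon|\ge\varepsilon^m$ for all $\varepsilon<\varepsilon_0$ (equivalently, every representative satisfies this condition). -/
open scoped BigOperators

namespace Colombeau

/-- A net `(r_ε)` of real numbers is *moderate* if `|r_ε| = O(ε^{-N})` as `ε → 0⁺`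
for some `N ∈ ℕ`. -/
def Moderate (r : ℝ → ℝ) : Prop :=
  ∃ N : ℕ, ∃ C : ℝ, 0 < C ∧ ∃ ε₀ : ℝ, 0 < ε₀ ∧
    ∀ ε : ℝ, 0 < ε → ε ≤ 1 → ε < ε₀ → |r ε| ≤ C / ε ^ N

/-- A net `(r_ε)` of real numbers is *negligible* if `|r_ε| = O(ε^m)` as `ε → 0⁺`
for every `m ∈ ℕ`. -/
def Negligible (r : ℝ → ℝ) : Prop :=
  ∀ m : ℕ, ∃ C : ℝ, 0 < C ∧ ∃ ε₀ : ℝ, 0 < ε₀ ∧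
    ∀ ε : ℝ, 0 < ε → ε ≤ 1 → ε < ε₀ → |r ε| ≤ C * ε ^ m

/-- The ring of moderate nets, as a subring of `ℝ → ℝ`. -/
def moderateSubring : Subring (ℝ → ℝ) where
  carrier := {r | Moderate r}
  zero_mem' := ⟨0, 1, one_pos, 1, one_pos, fun ε hε hε1 _ => by simp⟩
  one_mem' := ⟨0, 1, one_pos, 1, one_pos, fun ε hε hε1 _ => by simp⟩
  add_mem' := by
    rintro r s ⟨N1, C1, hC1, e1, he1, h1⟩ ⟨N2, C2, hC2, e2, he2, h2⟩
    refine ⟨N1 + N2, C1 + C2, by positivity, min e1 e2, by positivity, ?_⟩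
    intro ε hε hε1 hεe
    have k1 : |r ε| ≤ C1 / ε ^ (N1 + N2) := by
      refine (h1 ε hε hε1 (lt_of_lt_of_le hεe (min_le_left _ _))).trans ?_
      exact div_le_div_of_nonneg_left hC1.le (pow_pos hε _)
        (pow_le_pow_of_le_one hε.le hε1 (Nat.le_add_right _ _))
    have k2 : |s ε| ≤ C2 / ε ^ (N1 + N2) := by
      refine (h2 ε hε hε1 (lt_of_lt_of_le hεe (min_le_right _ _))).trans ?_
      exact div_le_div_of_nonneg_left hC2.le (pow_pos hε _)
        (pow_le_pow_of_le_one hε.le hε1 (Nat.le_add_left _ _))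
    calc |(r + s) ε| ≤ |r ε| + |s ε| := abs_add_le _ _
      _ ≤ C1 / ε ^ (N1 + N2) + C2 / ε ^ (N1 + N2) := add_le_add k1 k2
      _ = (C1 + C2) / ε ^ (N1 + N2) := (add_div _ _ _).symm
  mul_mem' := by
    rintro r s ⟨N1, C1, hC1, e1, he1, h1⟩ ⟨N2, C2, hC2, e2, he2, h2⟩
    refine ⟨N1 + N2, C1 * C2, by positivity, min e1 e2, by positivity, ?_⟩
    intro ε hε hε1 hεe
    have k1 := h1 ε hε hε1 (lt_of_lt_of_le hεe (min_le_left _ _))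
    have k2 := h2 ε hε hε1 (lt_of_lt_of_le hεe (min_le_right _ _))
    calc |(r * s) ε| = |r ε| * |s ε| := abs_mul _ _
      _ ≤ (C1 / ε ^ N1) * (C2 / ε ^ N2) :=
          mul_le_mul k1 k2 (abs_nonneg _) (by positivity)
      _ = (C1 * C2) / ε ^ (N1 + N2) := by rw [div_mul_div_comm, ← pow_add]
  neg_mem' := by
    rintro r ⟨N, C, hC, e0, he0, h⟩
    exact ⟨N, C, hC, e0, he0, fun ε hε hε1 hεe => by
      simpa using h ε hε hε1 hεe⟩

/-- The ideal of negligible nets inside the ring of moderate nets. -/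
def negligibleIdeal : Ideal moderateSubring where
  carrier := {r | Negligible (r : ℝ → ℝ)}
  zero_mem' := by
    intro m
    exact ⟨1, one_pos, 1, one_pos, fun ε hε hε1 _ => by
      simpa using (pow_nonneg hε.le m)⟩
  add_mem' := by
    intro r s hr hs m
    obtain ⟨C1, hC1, e1, he1, h1⟩ := hr m
    obtain ⟨C2, hC2, e2, he2, h2⟩ := hs m
    refine ⟨C1 + C2, by positivity, min e1 e2, by positivity, fun ε hε hε1 hεe => ?_⟩
    calc |((r : ℝ → ℝ) + (s : ℝ → ℝ)) ε| ≤ |(r : ℝ → ℝ) ε| + |(s : ℝ → ℝ) ε| := abs_add_le _ _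
      _ ≤ C1 * ε ^ m + C2 * ε ^ m :=
          add_le_add (h1 ε hε hε1 (lt_of_lt_of_le hεe (min_le_left _ _)))
            (h2 ε hε hε1 (lt_of_lt_of_le hεe (min_le_right _ _)))
      _ = (C1 + C2) * ε ^ m := (add_mul _ _ _).symm
  smul_mem' := by
    intro c x hx m
    obtain ⟨N, C1, hC1, e1, he1, h1⟩ := c.2
    obtain ⟨C2, hC2, e2, he2, h2⟩ := hx (m + N)
    refine ⟨C1 * C2, by positivity, min e1 e2, by positivity, fun ε hε hε1 hεe => ?_⟩
    have k1 := h1 ε hε hε1 (lt_of_lt_of_le hεe (min_le_left _ _))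
    have k2 := h2 ε hε hε1 (lt_of_lt_of_le hεe (min_le_right _ _))
    have hne : ε ^ N ≠ 0 := by positivity
    calc |((c : ℝ → ℝ) * (x : ℝ → ℝ)) ε| = |(c : ℝ → ℝ) ε| * |(x : ℝ → ℝ) ε| := abs_mul _ _
      _ ≤ (C1 / ε ^ N) * (C2 * ε ^ (m + N)) :=
          mul_le_mul k1 k2 (abs_nonneg _) (by positivity)
      _ = (C1 * C2) * ε ^ m := by field_simp [pow_add]; ring

/-- The ring `ℝ̃` of Colombeau generalized real numbers: moderate nets modulo
negligible nets. -/
def RTilde : Type := moderateSubring ⧸ negligibleIdeal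

noncomputable instance : CommRing RTilde :=
  inferInstanceAs (CommRing (moderateSubring ⧸ negligibleIdeal))

/-- A symplectic form on an `ℝ̃`-module `V`: an `ℝ̃`-bilinear form that is
skew-symmetric and non-degenerate. -/
structure IsSymplecticForm {V : Type*} [AddCommGroup V] [Module RTilde V]
    (σ : V →ₗ[RTilde] V →ₗ[RTilde] RTilde) : Prop where
  skew : ∀ v w : V, σ v w = - σ w v
  nondeg : ∀ v : V, (∀ w : V, σ v w = 0) → v = 0

end Colombeau

namespace Colombeau

/-- A moderate net is *strictly nonzero* if `|r_ε| ≥ ε^m` for some `m ∈ ℕ` and all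
sufficiently small `ε`. -/
def StrictlyNonzero (s : moderateSubring) : Prop :=
  ∃ m : ℕ, ∃ ε₀ : ℝ, 0 < ε₀ ∧ ∀ ε : ℝ, 0 < ε → ε ≤ 1 → ε < ε₀ → ε ^ m ≤ |(s : ℝ → ℝ) ε|

/-!
If `s · t - 1` is negligible with `t` moderate, then for small `ε` we have `|s_ε t_ε| ≥ 1/2`
and `ε^N |t_ε| ≤ 1/2` for some `N`, hence `|s_ε| ≥ ε^N`. Conversely, if `|s_ε| ≥ ε^m` for small
`ε`, then `(s_ε⁻¹)` is moderate and `s · s⁻¹ - 1` vanishes for small `ε`, so it is negligible.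
-/

open Filter Topology

theorem eventually_nhdsGT_zero_iff {P : ℝ → Prop} :
    (∃ ε₀ : ℝ, 0 < ε₀ ∧ ∀ ε : ℝ, 0 < ε → ε ≤ 1 → ε < ε₀ → P ε) ↔ ∀ᶠ ε in 𝓝[>] 0, P ε := by
  rw [(nhdsGT_basis_Ioc (0 : ℝ)).eventually_iff]
  constructor
  · rintro ⟨ε₀, hε₀, h⟩
    refine ⟨min ε₀ 1 / 2, by positivity, fun ε ⟨hε, hε'⟩ => h ε hε ?_ ?_⟩
    all_goals linarith [min_le_left ε₀ 1, min_le_right ε₀ 1]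
  · rintro ⟨ε₀, hε₀, h⟩
    exact ⟨ε₀, hε₀, fun ε hε _ hε' => h ⟨hε, hε'.le⟩⟩

theorem moderate_iff {r : ℝ → ℝ} :
    Moderate r ↔ ∃ N : ℕ, ∃ C > 0, ∀ᶠ ε in 𝓝[>] 0, |r ε| ≤ C / ε ^ N := by
  simp only [Moderate, eventually_nhdsGT_zero_iff]

theorem negligible_iff {r : ℝ → ℝ} :
    Negligible r ↔ ∀ m : ℕ, ∃ C > 0, ∀ᶠ ε in 𝓝[>] 0, |r ε| ≤ C * ε ^ m := by
  simp only [Negligible, eventually_nhdsGT_zero_iff]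

theorem strictlyNonzero_iff {s : moderateSubring} :
    StrictlyNonzero s ↔ ∃ m : ℕ, ∀ᶠ ε in 𝓝[>] 0, ε ^ m ≤ |(s : ℝ → ℝ) ε| := by
  simp only [StrictlyNonzero, eventually_nhdsGT_zero_iff]

theorem eventually_const_mul_le (C : ℝ) {c : ℝ} (hc : 0 < c) :
    ∀ᶠ ε in 𝓝[>] (0 : ℝ), C * ε ≤ c := by
  have : Tendsto (fun ε : ℝ => C * ε) (𝓝[>] 0) (𝓝 0) := by
    simpa using ((continuous_const_mul C).tendsto 0).mono_left nhdsWithin_le_nhds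
  exact this.eventually (ge_mem_nhds hc)

theorem Negligible.eventually_abs_le {r : ℝ → ℝ} (hr : Negligible r) {c : ℝ} (hc : 0 < c) :
    ∀ᶠ ε in 𝓝[>] 0, |r ε| ≤ c := by
  obtain ⟨C, -, hC⟩ := negligible_iff.1 hr 1
  filter_upwards [hC, eventually_const_mul_le C hc] with ε h₁ h₂
  rw [pow_one] at h₁
  exact h₁.trans h₂

theorem Moderate.exists_eventually_pow_mul_abs_le {r : ℝ → ℝ} (hr : Moderate r) {c : ℝ}
    (hc : 0 < c) : ∃ N : ℕ, ∀ᶠ ε in 𝓝[>] 0, ε ^ N * |r ε| ≤ c := by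
  obtain ⟨N, C, -, hC⟩ := moderate_iff.1 hr
  refine ⟨N + 1, ?_⟩
  filter_upwards [hC, eventually_const_mul_le C hc, self_mem_nhdsWithin]
    with ε h₁ h₂ (hε : 0 < ε)
  calc ε ^ (N + 1) * |r ε| ≤ ε ^ (N + 1) * (C / ε ^ N) := by gcongr
    _ = C * ε := by field_simp; ring
    _ ≤ c := h₂

theorem negligible_of_eventually_eq_zero {r : ℝ → ℝ} (hr : ∀ᶠ ε in 𝓝[>] 0, r ε = 0) :
    Negligible r := by
  refine negligible_iff.2 fun m => ⟨1, one_pos, ?_⟩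
  filter_upwards [hr, self_mem_nhdsWithin] with ε h (hε : 0 < ε)
  rw [h, abs_zero, one_mul]
  positivity

theorem exists_eventually_pow_le_abs_of_negligible_mul_sub_one {s t : ℝ → ℝ}
    (ht : Moderate t) (hst : Negligible (s * t - 1)) :
    ∃ m : ℕ, ∀ᶠ ε in 𝓝[>] 0, ε ^ m ≤ |s ε| := by
  obtain ⟨N, hN⟩ := ht.exists_eventually_pow_mul_abs_le one_half_pos
  refine ⟨N, ?_⟩
  filter_upwards [hN, hst.eventually_abs_le one_half_pos, self_mem_nhdsWithin]
    with ε h₁ h₂ (hε : 0 < ε)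
  have hst : 1 / 2 ≤ |s ε| * |t ε| := by
    rw [← abs_mul]
    have := abs_sub_abs_le_abs_sub 1 (s ε * t ε)
    rw [abs_one, abs_sub_comm] at this
    simp only [Pi.sub_apply, Pi.mul_apply, Pi.one_apply] at h₂
    linarith
  calc ε ^ N = 2 * (ε ^ N * (1 / 2)) := by ring
    _ ≤ 2 * (ε ^ N * (|s ε| * |t ε|)) := by gcongr
    _ = 2 * (|s ε| * (ε ^ N * |t ε|)) := by ring
    _ ≤ 2 * (|s ε| * (1 / 2)) := by gcongr
    _ = |s ε| := by ring

theorem moderate_inv_of_eventually_pow_le_abs {s : ℝ → ℝ} {m : ℕ}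
    (hs : ∀ᶠ ε in 𝓝[>] 0, ε ^ m ≤ |s ε|) : Moderate s⁻¹ := by
  refine moderate_iff.2 ⟨m, 1, one_pos, ?_⟩
  filter_upwards [hs, self_mem_nhdsWithin] with ε h (hε : 0 < ε)
  rw [Pi.inv_apply, abs_inv, one_div]
  exact inv_anti₀ (pow_pos hε m) h

theorem isUnit_mk_iff_strictlyNonzero (s : moderateSubring) :
    IsUnit (Ideal.Quotient.mk negligibleIdeal s : RTilde) ↔ StrictlyNonzero s := by
  rw [strictlyNonzero_iff, isUnit_iff_exists_inv]
  constructor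
  · rintro ⟨u, hu⟩
    obtain ⟨t, rfl⟩ := Ideal.Quotient.mk_surjective u
    rw [← map_mul, ← map_one (Ideal.Quotient.mk _), Ideal.Quotient.eq] at hu
    exact exists_eventually_pow_le_abs_of_negligible_mul_sub_one t.2 hu
  · rintro ⟨m, hm⟩
    have hne : ∀ᶠ ε in 𝓝[>] 0, (s : ℝ → ℝ) ε ≠ 0 := by
      filter_upwards [hm, self_mem_nhdsWithin] with ε h (hε : 0 < ε)
      exact abs_pos.1 ((pow_pos hε m).trans_le h)
    refine ⟨Ideal.Quotient.mk _ ⟨(s : ℝ → ℝ)⁻¹, moderate_inv_of_eventually_pow_le_abs hm⟩, ?_⟩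
    rw [← map_mul, ← map_one (Ideal.Quotient.mk _), Ideal.Quotient.eq]
    refine negligible_of_eventually_eq_zero ?_
    filter_upwards [hne] with ε h
    exact sub_eq_zero.2 (mul_inv_cancel₀ h)

/-- An element `r` of the ring `ℝ̃` of Colombeau generalized real numbers is invertible
in `ℝ̃` if and only if it has a representative which is strictly nonzero; equivalently,
if and only if every representative of `r` is strictly nonzero. -/
theorem isUnit_iff_strictlyNonzero (r : RTilde) :
    (IsUnit r ↔
      ∃ s : moderateSubring, (Ideal.Quotient.mk negligibleIdeal s : RTilde) = r ∧
        StrictlyNonzero s) ∧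
    (IsUnit r ↔
      ∀ s : moderateSubring, (Ideal.Quotient.mk negligibleIdeal s : RTilde) = r →
        StrictlyNonzero s) := by
  obtain ⟨s₀, rfl⟩ := Ideal.Quotient.mk_surjective r
  refine ⟨⟨fun h => ⟨s₀, rfl, (isUnit_mk_iff_strictlyNonzero s₀).1 h⟩, ?_⟩,
    ⟨fun h s hs => (isUnit_mk_iff_strictlyNonzero s).1 (hs ▸ h),
      fun h => (isUnit_mk_iff_strictlyNonzero s₀).2 (h s₀ rfl)⟩⟩
  rintro ⟨s, hs, h⟩
  exact hs ▸ (isUnit_mk_iff_strictlyNonzero s).2 h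

end Colombeau
end

section
/- If $(V,\sigma)$ is a free symplectic $\widetilde{\mathbb{R}}$-module of finite rank, then the rank of $V$ is even. -/
open scoped BigOperators

/-! The Gram matrix `A` of a skew form in a basis satisfies `Aᵀ = -A`, so in odd rank
`det A = -det A`, i.e. `2 * det A = 0`. As `2 ≠ 0` in `ℝ̃`, `det A` is a zero divisor, and by
McCoy's theorem the rows of `A` are linearly dependent: some nonzero vector lies in the kernel of
the form, contradicting non-degeneracy. -/

open scoped nonZeroDivisors
open Matrix Filter Topology

theorem Matrix.SeparatingLeft.det_mem_nonZeroDivisors {n R : Type*} [Fintype n] [DecidableEq n]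
    [CommRing R] {A : Matrix n n R} (hA : A.SeparatingLeft) : A.det ∈ R⁰ := by
  rw [← nonsingular_iff_det_mem_nonZeroDivisors, ← linearIndependent_row_iff,
    ← vecMul_injective_iff]
  intro v w hvw
  rw [← sub_eq_zero]
  exact hA.eq_zero_of_vecMul_eq_zero (by rw [sub_vecMul]; exact sub_eq_zero.2 hvw)

theorem Matrix.two_mul_det_eq_zero_of_transpose_eq_neg {n R : Type*} [Fintype n] [DecidableEq n]
    [CommRing R] {A : Matrix n n R} (hA : Aᵀ = -A) (hn : Odd (Fintype.card n)) :
    2 * A.det = 0 := by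
  have h := det_transpose A
  rw [hA, det_neg, hn.neg_one_pow] at h
  linear_combination -h

theorem LinearMap.SeparatingLeft.even_finrank_of_skew {R M : Type*} [CommRing R]
    [AddCommGroup M] [Module R M] [Module.Free R M] [Module.Finite R M]
    {σ : M →ₗ[R] M →ₗ[R] R} (hσ : σ.SeparatingLeft) (hskew : ∀ v w, σ v w = -σ w v)
    (h2 : (2 : R) ≠ 0) : Even (Module.finrank R M) := by
  have : Nontrivial R := nontrivial_of_ne _ _ h2
  let b := Module.Free.chooseBasis R M
  set A := LinearMap.toMatrix₂ b b σ
  have hA : Aᵀ = -A := by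
    ext i j
    simp [A, LinearMap.toMatrix₂_apply, hskew (b j) (b i)]
  rw [Module.finrank_eq_card_chooseBasisIndex, ← Nat.not_odd_iff_even]
  intro hodd
  exact h2 (mem_nonZeroDivisors_iff_right.mp ((hσ.toMatrix₂ b b).det_mem_nonZeroDivisors) 2
    (two_mul_det_eq_zero_of_transpose_eq_neg hA hodd))

namespace Colombeau

theorem Negligible.tendsto_zero {r : ℝ → ℝ} (hr : Negligible r) : Tendsto r (𝓝[>] 0) (𝓝 0) := by
  obtain ⟨C, -, ε₀, hε₀, hr⟩ := hr 1
  have hC : Tendsto (fun ε : ℝ => C * ε) (𝓝[>] 0) (𝓝 0) :=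
    tendsto_nhdsWithin_of_tendsto_nhds ((continuous_const_mul C).tendsto' 0 0 (mul_zero C))
  refine squeeze_zero_norm' ?_ hC
  filter_upwards [Ioo_mem_nhdsGT (lt_min one_pos hε₀)] with ε hε
  simpa using hr ε hε.1 (hε.2.le.trans (min_le_left _ _)) (hε.2.trans_le (min_le_right _ _))

theorem not_negligible_const {c : ℝ} (hc : c ≠ 0) : ¬ Negligible (fun _ => c) :=
  fun h => hc (tendsto_nhds_unique tendsto_const_nhds h.tendsto_zero)

instance : NeZero (2 : RTilde) := by
  refine ⟨fun h => ?_⟩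
  have h2 : (2 : moderateSubring) ∈ negligibleIdeal := by
    rw [← Ideal.Quotient.eq_zero_iff_mem, map_ofNat]
    exact h
  exact not_negligible_const (c := 2) two_ne_zero h2

/-- The rank of a free symplectic `ℝ̃`-module of finite rank is even. -/
theorem rank_even_of_symplectic {V : Type*} [AddCommGroup V] [Module RTilde V]
    [Module.Free RTilde V] [Module.Finite RTilde V]
    (σ : V →ₗ[RTilde] V →ₗ[RTilde] RTilde) (hσ : IsSymplecticForm σ) :
    Even (Module.finrank RTilde V) :=
  LinearMap.SeparatingLeft.even_finrank_of_skew hσ.nondeg hσ.skew two_ne_zero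

end Colombeau
end

section
/- Let $(V_1,\sigma_1)$ and $(V_2,\sigma_2)$ be free symplectic $\widetilde{\mathbb{R}}$-modules of equal finite rank. Then every symplectic map $f:V_1\to V_2$ is a symplectomorphism, i.e., an $\widetilde{\mathbb{R}}$-linear isomorphism preserving the symplectic forms. -/
open scoped BigOperators

/-!
A symplectic map is injective, because `σ₁` is non-degenerate and `σ₂ (f v) (f w) = σ₁ v w`.
An injective linear map between free modules of the same finite rank has a determinant
that is a non-zero-divisor (McCoy), and in `ℝ̃` every non-zero-divisor is a unit: if the
class of `r` is not invertible, then `|r ε| < ε ^ k` at points `ε = ε_k → 0`, so the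
indicator of `{ε_k}` is a nonzero element killed by `r`.
-/

theorem LinearMap.bijective_of_injective_of_basis {R M₁ M₂ ι : Type*} [CommRing R]
    [AddCommGroup M₁] [Module R M₁] [AddCommGroup M₂] [Module R M₂] [Fintype ι] [DecidableEq ι]
    (hR : ∀ x ∈ nonZeroDivisors R, IsUnit x) (b₁ : Module.Basis ι R M₁)
    (b₂ : Module.Basis ι R M₂) {f : M₁ →ₗ[R] M₂} (hf : Function.Injective f) :
    Function.Bijective f := by
  have hcol : LinearIndependent R (LinearMap.toMatrix b₁ b₂ f).col := by
    have hcol_eq : (LinearMap.toMatrix b₁ b₂ f).col = b₂.equivFun ∘ f ∘ b₁ := by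
      ext j i
      simp [LinearMap.toMatrix_apply]
    rw [hcol_eq]
    exact (b₁.linearIndependent.map' f (LinearMap.ker_eq_bot.mpr hf)).map' _ b₂.equivFun.ker
  have hdet := hR _ (Matrix.nonsingular_iff_det_mem_nonZeroDivisors.mp
    (Matrix.Nonsingular.of_linearIndependent_col hcol))
  exact (LinearEquiv.ofIsUnitDet hdet).bijective

namespace Colombeau

lemma moderate_indicator_one (s : Set ℝ) : Moderate (s.indicator 1) :=
  ⟨0, 1, one_pos, 1, one_pos, fun t _ _ _ => by by_cases ht : t ∈ s <;> simp [ht]⟩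

lemma not_negligible_indicator_one_range {ε : ℕ → ℝ}
    (hε : ∀ k, 0 < ε k ∧ ε k ≤ 1 ∧ ε k < 1 / (k + 1)) :
    ¬Negligible ((Set.range ε).indicator 1) := by
  intro hneg
  obtain ⟨C, hC, ε₀, hε₀, hbound⟩ := hneg 1
  obtain ⟨k, hk⟩ := exists_nat_one_div_lt (lt_min hε₀ (inv_pos.mpr hC))
  obtain ⟨hεk, hεk1, hεk_lt⟩ := hε k
  have hsmall : ε k < min ε₀ C⁻¹ := hεk_lt.trans hk
  have hone := hbound (ε k) hεk hεk1 (hsmall.trans_le (min_le_left _ _))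
  simp only [Set.indicator_of_mem (Set.mem_range_self k), Pi.one_apply, abs_one, pow_one]
    at hone
  have : C * ε k < 1 := by
    simpa [hC.ne'] using mul_lt_mul_of_pos_left (hsmall.trans_le (min_le_right _ _)) hC
  linarith

lemma negligible_mul_indicator_one_range {r : ℝ → ℝ} {ε : ℕ → ℝ}
    (hε : ∀ k, 0 < ε k ∧ ε k ≤ 1 ∧ |r (ε k)| < ε k ^ k) :
    Negligible (r * (Set.range ε).indicator 1) := by
  intro m
  -- below `ε k₀` only the points `ε k` with `k > m` remain
  obtain ⟨k₀, hk₀⟩ := Finite.exists_min (fun k : Fin (m + 1) => ε k)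
  refine ⟨1, one_pos, ε k₀, (hε k₀).1, fun t ht _ htk₀ => ?_⟩
  by_cases hmem : t ∈ Set.range ε
  · obtain ⟨k, rfl⟩ := hmem
    have hmk : m ≤ k := by
      by_contra! hkm
      exact (hk₀ ⟨k, by omega⟩).not_gt htk₀
    have hsmall : |r (ε k)| ≤ ε k ^ m :=
      (hε k).2.2.le.trans (pow_le_pow_of_le_one (hε k).1.le (hε k).2.1 hmk)
    simpa [Set.indicator_of_mem (Set.mem_range_self k)] using hsmall
  · simp [hmem, pow_nonneg ht.le]

noncomputable def RTilde.mk : moderateSubring →+* RTilde := Ideal.Quotient.mk negligibleIdeal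

namespace RTilde

lemma mk_surjective : Function.Surjective mk := Ideal.Quotient.mk_surjective

lemma mk_eq_zero_iff {r : moderateSubring} : mk r = 0 ↔ Negligible (r : ℝ → ℝ) :=
  Ideal.Quotient.eq_zero_iff_mem

lemma isUnit_mk_of_pow_le {r : moderateSubring} {m : ℕ} {ε₀ : ℝ} (hε₀ : 0 < ε₀)
    (h : ∀ ε : ℝ, 0 < ε → ε ≤ 1 → ε < ε₀ → ε ^ m ≤ |(r : ℝ → ℝ) ε|) : IsUnit (mk r) := by
  have hinv : Moderate (r : ℝ → ℝ)⁻¹ := ⟨m, 1, one_pos, ε₀, hε₀, fun ε hε hε1 hεε₀ => by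
    simpa [abs_inv] using inv_anti₀ (pow_pos hε m) (h ε hε hε1 hεε₀)⟩
  refine .of_mul_eq_one (mk ⟨_, hinv⟩) (sub_eq_zero.mp ?_)
  rw [← map_one mk, ← map_mul, ← map_sub, mk_eq_zero_iff]
  intro n
  refine ⟨1, one_pos, ε₀, hε₀, fun ε hε hε1 hεε₀ => ?_⟩
  have hr : (r : ℝ → ℝ) ε ≠ 0 := abs_pos.mp ((pow_pos hε m).trans_le (h ε hε hε1 hεε₀))
  simp [hr, pow_nonneg hε.le]

lemma exists_seq_of_not_isUnit {r : moderateSubring} (hr : ¬IsUnit (mk r)) :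
    ∃ ε : ℕ → ℝ, ∀ k, 0 < ε k ∧ ε k ≤ 1 ∧ ε k < 1 / (k + 1) ∧ |(r : ℝ → ℝ) (ε k)| < ε k ^ k := by
  have : ∀ k : ℕ, ∃ ε : ℝ, 0 < ε ∧ ε ≤ 1 ∧ ε < 1 / (k + 1) ∧ |(r : ℝ → ℝ) ε| < ε ^ k := by
    intro k
    by_contra! h
    exact hr (isUnit_mk_of_pow_le (by positivity) h)
  choose ε hε using this
  exact ⟨ε, hε⟩

theorem isUnit_of_mem_nonZeroDivisors {x : RTilde} (hx : x ∈ nonZeroDivisors RTilde) :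
    IsUnit x := by
  obtain ⟨r, rfl⟩ := mk_surjective x
  by_contra hr
  obtain ⟨ε, hε⟩ := exists_seq_of_not_isUnit hr
  set y : moderateSubring := ⟨_, moderate_indicator_one (Set.range ε)⟩
  have hy : mk y ≠ 0 := by
    rw [Ne, mk_eq_zero_iff]
    exact not_negligible_indicator_one_range fun k => ⟨(hε k).1, (hε k).2.1, (hε k).2.2.1⟩
  refine hy (mem_nonZeroDivisors_iff_right.mp hx _ ?_)
  rw [← map_mul, mul_comm, mk_eq_zero_iff]
  exact negligible_mul_indicator_one_range fun k => ⟨(hε k).1, (hε k).2.1, (hε k).2.2.2⟩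

end RTilde

theorem IsSymplecticForm.injective_of_map_eq {V₁ V₂ : Type*} [AddCommGroup V₁] [Module RTilde V₁]
    [AddCommGroup V₂] [Module RTilde V₂] {σ₁ : V₁ →ₗ[RTilde] V₁ →ₗ[RTilde] RTilde}
    (hσ₁ : IsSymplecticForm σ₁) {σ₂ : V₂ →ₗ[RTilde] V₂ →ₗ[RTilde] RTilde} {f : V₁ →ₗ[RTilde] V₂}
    (hf : ∀ v w : V₁, σ₂ (f v) (f w) = σ₁ v w) : Function.Injective f := by
  refine (injective_iff_map_eq_zero f).mpr fun v hv => hσ₁.nondeg v fun w => ?_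
  rw [← hf, hv, map_zero, LinearMap.zero_apply]

theorem symplectic_map_bijective_of_equal_rank_general {V₁ V₂ : Type*}
    [AddCommGroup V₁] [Module RTilde V₁] [AddCommGroup V₂] [Module RTilde V₂]
    (d : ℕ) (b₁ : Module.Basis (Fin d) RTilde V₁) (b₂ : Module.Basis (Fin d) RTilde V₂)
    (σ₁ : V₁ →ₗ[RTilde] V₁ →ₗ[RTilde] RTilde) (hσ₁ : IsSymplecticForm σ₁)
    (σ₂ : V₂ →ₗ[RTilde] V₂ →ₗ[RTilde] RTilde)
    (f : V₁ →ₗ[RTilde] V₂) (hf : ∀ v w : V₁, σ₂ (f v) (f w) = σ₁ v w) :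
    Function.Bijective f :=
  LinearMap.bijective_of_injective_of_basis (fun _ => RTilde.isUnit_of_mem_nonZeroDivisors) b₁ b₂
    (hσ₁.injective_of_map_eq hf)

/-- A symplectic map between free symplectic `ℝ̃`-modules of equal finite rank is a
symplectomorphism, i.e. an `ℝ̃`-linear isomorphism preserving the symplectic forms. -/
theorem symplectic_map_bijective_of_equal_rank {V₁ V₂ : Type*}
    [AddCommGroup V₁] [Module RTilde V₁] [AddCommGroup V₂] [Module RTilde V₂]
    (d : ℕ) (b₁ : Module.Basis (Fin d) RTilde V₁) (b₂ : Module.Basis (Fin d) RTilde V₂)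
    (σ₁ : V₁ →ₗ[RTilde] V₁ →ₗ[RTilde] RTilde) (hσ₁ : IsSymplecticForm σ₁)
    (σ₂ : V₂ →ₗ[RTilde] V₂ →ₗ[RTilde] RTilde) (hσ₂ : IsSymplecticForm σ₂)
    (f : V₁ →ₗ[RTilde] V₂) (hf : ∀ v w : V₁, σ₂ (f v) (f w) = σ₁ v w) :
    Function.Bijective f :=
  symplectic_map_bijective_of_equal_rank_general d b₁ b₂ σ₁ hσ₁ σ₂ f hf

end Colombeau
end

section
/- Let $(V,\sigma)$ be a free symplectic $\widetilde{\mathbb{R}}$-module of finite rank. Then $(V',\{\,\,,\,\})$, where $V'$ is the dual module and $\{\,\,,\,\}$ is the Poisson bracket, is a symplectic $\widetilde{\mathbb{R}}$-module that is free and of the same rank as $V$. -/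
open scoped BigOperators

/-! Non-degeneracy makes `σ : V → V'` injective, and the Hamiltonian map `H` is a right inverse
of it, so `σ` is a linear isomorphism `V ≃ V'` with inverse `H`. Hence `V'` is free of the same
rank, and the Poisson bracket is the pull-back of `σ` along the isomorphism `H`, which is again
symplectic. -/

namespace Colombeau

namespace IsSymplecticForm

variable {V W : Type*} [AddCommGroup V] [Module RTilde V] [AddCommGroup W] [Module RTilde W]
  {σ : V →ₗ[RTilde] V →ₗ[RTilde] RTilde}

theorem injective (hσ : IsSymplecticForm σ) : Function.Injective σ :=
  (injective_iff_map_eq_zero σ).2 fun v hv =>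
    hσ.nondeg v fun w => by rw [hv, LinearMap.zero_apply]

theorem compl₁₂_linearEquiv (hσ : IsSymplecticForm σ) (e : W ≃ₗ[RTilde] V) :
    IsSymplecticForm (σ.compl₁₂ (e : W →ₗ[RTilde] V) e) where
  skew w w' := hσ.skew (e w) (e w')
  nondeg w hw := e.map_eq_zero_iff.1 <| hσ.nondeg (e w) fun v => by
    simpa using hw (e.symm v)

end IsSymplecticForm

/-- For a free symplectic `ℝ̃`-module `(V,σ)` of finite rank, the dual module `V'`
together with the Poisson bracket `{φ,ψ} = σ(h_φ,h_ψ)` is a symplectic `ℝ̃`-module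
that is free and of the same rank as `V`. Here the Hamiltonian vectors are provided
by a map `H` with `φ(v) = σ(H φ, v)` for all `v`. -/
theorem dual_with_poisson_bracket_is_symplectic {V : Type*} [AddCommGroup V]
    [Module RTilde V] [Module.Free RTilde V] [Module.Finite RTilde V]
    (σ : V →ₗ[RTilde] V →ₗ[RTilde] RTilde) (hσ : IsSymplecticForm σ)
    (H : (V →ₗ[RTilde] RTilde) → V)
    (hH : ∀ (φ : V →ₗ[RTilde] RTilde) (v : V), φ v = σ (H φ) v) :
    Module.Free RTilde (V →ₗ[RTilde] RTilde) ∧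
    Module.Finite RTilde (V →ₗ[RTilde] RTilde) ∧
    Module.finrank RTilde (V →ₗ[RTilde] RTilde) = Module.finrank RTilde V ∧
    ∃ B : (V →ₗ[RTilde] RTilde) →ₗ[RTilde] (V →ₗ[RTilde] RTilde) →ₗ[RTilde] RTilde,
      (∀ φ ψ : V →ₗ[RTilde] RTilde, B φ ψ = σ (H φ) (H ψ)) ∧
      IsSymplecticForm B := by
  have hσH : ∀ φ, σ (H φ) = φ := fun φ => (LinearMap.ext (hH φ)).symm
  let e : V ≃ₗ[RTilde] (V →ₗ[RTilde] RTilde) :=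
    LinearEquiv.ofBijective σ ⟨hσ.injective, fun φ => ⟨H φ, hσH φ⟩⟩
  have hHe : ∀ φ, H φ = e.symm φ := fun φ =>
    e.injective (by rw [e.apply_symm_apply]; exact hσH φ)
  exact ⟨Module.Free.of_equiv e, Module.Finite.equiv e, e.finrank_eq.symm,
    σ.compl₁₂ e.symm e.symm, fun φ ψ => by simp [hHe], hσ.compl₁₂_linearEquiv e.symm⟩

end Colombeau
end
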